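/- arXiv:2311.15176 — 2 statements merged into one kernel-verified Lean document; each statement's English description precedes it below -/
import Mathlib

section
/- Let G = ℤ × F_2 where F_2 is the free group on two generators y_1, y_2, and let X = {x, y_1, y_2} where x = (1, e) and y_1, y_2 denote (0, y_1) and (0, y_2). Then X is a Leinert set: for every n ≥ 1 and every sequence (x_1, …, x_{2n}) of elements of X with x_i ≠ x_{i+1} for all 1 ≤ i < 2n, the alternating product x_1^{-1} x_2 x_3^{-1} x_4 ⋯ x_{2n−1}^{-1} x_{2n} is not the identity of G. -/
/-- The alternating product `x_1⁻¹ x_2 x_3⁻¹ x_4 ⋯ x_{2n-1}⁻¹ x_{2n}` associated to a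
string `(x_1, …, x_{2n})` of group elements. -/
def altProd {G : Type*} [Group G] {n : ℕ} (x : Fin (2 * n) → G) : G :=
  (List.ofFn fun i : Fin n =>
    (x ⟨2 * i.val, by have := i.isLt; omega⟩)⁻¹ *
      x ⟨2 * i.val + 1, by have := i.isLt; omega⟩).prod

namespace ZF2Aux

abbrev Gp := Multiplicative ℤ × FreeGroup (Fin 2)

def xg : Gp := (Multiplicative.ofAdd 1, 1)

def yy (j : Fin 2) : Gp := (1, FreeGroup.of j)

lemma yy_ne_xg (j : Fin 2) : yy j ≠ xg := by
  intro h
  have h2 := congrArg Prod.snd h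
  simp only [yy, xg] at h2
  exact FreeGroup.of_ne_one j h2

lemma yy_inj {i j : Fin 2} (h : yy i = yy j) : i = j := by
  have h2 := congrArg Prod.snd h
  simp only [yy] at h2
  exact FreeGroup.of_injective h2

/-- The letter contributed by an element of `X` (empty for `xg`). -/
def letter (g : Gp) (b : Bool) : List (Fin 2 × Bool) :=
  if g = yy 0 then [(0, b)] else if g = yy 1 then [(1, b)] else []

lemma letter_xg (b : Bool) : letter xg b = [] := by
  unfold letter
  rw [if_neg (fun h => yy_ne_xg 0 h.symm), if_neg (fun h => yy_ne_xg 1 h.symm)]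

lemma letter_yy (j : Fin 2) (b : Bool) : letter (yy j) b = [(j, b)] := by
  unfold letter
  match j with
  | 0 => rw [if_pos rfl]
  | 1 => rw [if_neg (fun h => absurd (yy_inj h) (by decide)), if_pos rfl]

lemma letter_sub (g : Gp) (b : Bool) : letter g b = [] ∨ ∃ j, letter g b = [(j, b)] := by
  unfold letter
  split
  · exact Or.inr ⟨0, rfl⟩
  · split
    · exact Or.inr ⟨1, rfl⟩
    · exact Or.inl rfl

/-- The flat word in `F₂` read off from the first `m` letters of the string. -/
def W (x : ℕ → Gp) : ℕ → List (Fin 2 × Bool)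
  | 0 => []
  | m + 1 => W x m ++ letter (x m) (decide (m % 2 = 1))

/-- The last letter of `W x m`. -/
def lastL (x : ℕ → Gp) : ℕ → Option (Fin 2 × Bool)
  | 0 => none
  | m + 1 =>
    match letter (x m) (decide (m % 2 = 1)) with
    | [] => lastL x m
    | a :: _ => some a

lemma getLast?_W (x : ℕ → Gp) : ∀ m, (W x m).getLast? = lastL x m := by
  intro m
  induction m with
  | zero => rfl
  | succ m ih =>
    show (W x m ++ letter (x m) (decide (m % 2 = 1))).getLast? = lastL x (m + 1)
    rcases letter_sub (x m) (decide (m % 2 = 1)) with hl | ⟨j, hl⟩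
    all_goals {
      have e : lastL x (m + 1) =
          (match letter (x m) (decide (m % 2 = 1)) with
            | [] => lastL x m
            | a :: _ => some a) := rfl
      rw [e, hl]
      first
        | rw [List.append_nil, ih]
        | rw [List.getLast?_concat]
    }

/-- The no-cancellation relation. -/
def Rl (a b : Fin 2 × Bool) : Prop := ¬(a.1 = b.1 ∧ a.2 = !b.2)

lemma reduce_eq_self : ∀ {L : List (Fin 2 × Bool)}, List.Chain' Rl L → FreeGroup.reduce L = L := by
  intro L
  induction L with
  | nil => intro _; rfl
  | cons a t ih =>
    intro h
    rw [FreeGroup.reduce.cons, ih (List.isChain_cons.mp h).2]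
    cases t with
    | nil => rfl
    | cons b t' =>
      have hR : Rl a b := (List.isChain_cons.mp h).1 b rfl
      exact if_neg hR

lemma mk_ne_one {L : List (Fin 2 × Bool)} (h : List.Chain' Rl L) (hne : L ≠ []) :
    FreeGroup.mk L ≠ 1 := by
  intro he
  have h1 : (FreeGroup.mk L).toWord = [] := by rw [he]; rfl
  rw [FreeGroup.toWord_mk, reduce_eq_self h] at h1
  exact hne h1

section Main

variable (x : ℕ → Gp) (N : ℕ)
variable (Hmem : ∀ k, k < N → x k = xg ∨ ∃ j, x k = yy j)
variable (Hadj : ∀ k, k + 1 < N → x k ≠ x (k + 1))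

include Hmem Hadj in
/-- Main invariant: `W x m` is reduced, and its last letter comes from some
position `k < m` with only `xg`'s after it. -/
lemma invariant : ∀ m, m ≤ N →
    List.Chain' Rl (W x m) ∧
    (∀ p, lastL x m = some p →
      ∃ k, k < m ∧ x k = yy p.1 ∧ p.2 = decide (k % 2 = 1) ∧
        ∀ l, k < l → l < m → x l = xg) := by
  intro m
  induction m with
  | zero => exact fun _ => ⟨List.isChain_nil, fun p hp => by simp [lastL] at hp⟩
  | succ m ih =>
    intro hm
    obtain ⟨hchain, hlast⟩ := ih (by omega)
    rcases Hmem m (by omega) with hx | ⟨j, hx⟩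
    · -- x m = xg : nothing appended
      have hl : letter (x m) (decide (m % 2 = 1)) = [] := by rw [hx, letter_xg]
      constructor
      · show List.Chain' Rl (W x m ++ letter (x m) (decide (m % 2 = 1)))
        rw [hl, List.append_nil]; exact hchain
      · intro p hp
        have hp' : lastL x m = some p := by
          have e : lastL x (m + 1) =
              (match letter (x m) (decide (m % 2 = 1)) with
                | [] => lastL x m
                | a :: _ => some a) := rfl
          rw [e, hl] at hp; exact hp
        obtain ⟨k, hk, h1, h2, h3⟩ := hlast p hp'
        refine ⟨k, by omega, h1, h2, fun l hl1 hl2 => ?_⟩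
        rcases Nat.lt_or_ge l m with h | h
        · exact h3 l hl1 h
        · have : l = m := by omega
          rw [this, hx]
    · -- x m = yy j : one letter appended
      have hl : letter (x m) (decide (m % 2 = 1)) = [(j, decide (m % 2 = 1))] := by
        rw [hx, letter_yy]
      constructor
      · show List.Chain' Rl (W x m ++ letter (x m) (decide (m % 2 = 1)))
        rw [hl]; refine List.isChain_append.mpr ?_
        refine ⟨hchain, List.isChain_singleton _, ?_⟩
        intro b hb c hc
        simp only [List.head?_cons, Option.mem_def, Option.some_inj] at hc
        subst hc
        have hbl : lastL x m = some b := by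
          rw [← getLast?_W]; exact hb
        obtain ⟨k, hk, hky, hkb, hbet⟩ := hlast b hbl
        rcases Nat.lt_or_ge (k + 1) m with hkm | hkm
        · -- k + 2 = m : same parity, same sign
          have hk2 : k + 2 = m := by
            by_contra hc2
            have h1 : x (k + 1) = xg := hbet (k + 1) (by omega) hkm
            have h2 : x (k + 2) = xg := hbet (k + 2) (by omega) (by omega)
            exact Hadj (k + 1) (by omega) (h1.trans h2.symm)
          have hpar : decide (k % 2 = 1) = decide (m % 2 = 1) := by
            have hmod : k % 2 = m % 2 := by omega
            rw [hmod]
          intro ⟨_, hb2⟩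
          rw [hkb, hpar] at hb2
          simp at hb2
        · -- k + 1 = m : adjacent, different generators
          have hk1 : k + 1 = m := by omega
          have hne : x k ≠ x m := by
            rw [← hk1]; exact Hadj k (by omega)
          intro ⟨hb1, _⟩
          apply hne
          rw [hky, hx, hb1]
      · intro p hp
        have e : lastL x (m + 1) =
            (match letter (x m) (decide (m % 2 = 1)) with
              | [] => lastL x m
              | a :: _ => some a) := rfl
        rw [e, hl] at hp
        simp only [Option.some_inj] at hp
        subst hp
        exact ⟨m, by omega, hx, rfl, fun l h1 h2 => by omega⟩

include Hmem Hadj in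
lemma W_ne : ∀ m, 2 ≤ m → m ≤ N → W x m ≠ [] := by
  intro m
  induction m with
  | zero => omega
  | succ m ih =>
    intro h2 hN
    rcases Nat.lt_or_ge m 2 with h | h
    · have hm1 : m = 1 := by omega
      subst hm1
      have h01 : x 0 ≠ x 1 := Hadj 0 (by omega)
      show W x 1 ++ letter (x 1) (decide (1 % 2 = 1)) ≠ []
      show ([] ++ letter (x 0) (decide (0 % 2 = 1))) ++ letter (x 1) (decide (1 % 2 = 1)) ≠ []
      rcases Hmem 0 (by omega) with h0 | ⟨j, h0⟩
      · rcases Hmem 1 (by omega) with h1 | ⟨j, h1⟩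
        · exact absurd (h0.trans h1.symm) h01
        · simp [h1, letter_yy]
      · simp [h0, letter_yy]
    · show W x m ++ letter (x m) (decide (m % 2 = 1)) ≠ []
      intro hc
      rw [List.append_eq_nil_iff] at hc
      exact ih h (by omega) hc.1

end Main

/-- Recursive form of the alternating product over a total sequence. -/
def altP (x : ℕ → Gp) : ℕ → Gp
  | 0 => 1
  | n + 1 => altP x n * ((x (2 * n))⁻¹ * x (2 * n + 1))

lemma snd_letter_true (g : Gp) (hg : g = xg ∨ ∃ j, g = yy j) :
    g.2 = FreeGroup.mk (letter g true) := by
  rcases hg with h | ⟨j, h⟩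
  · subst h; rw [letter_xg]; exact FreeGroup.one_eq_mk
  · subst h; rw [letter_yy]; rfl

lemma snd_letter_false (g : Gp) (hg : g = xg ∨ ∃ j, g = yy j) :
    (g.2)⁻¹ = FreeGroup.mk (letter g false) := by
  rcases hg with h | ⟨j, h⟩
  · subst h; rw [letter_xg]
    show (1 : FreeGroup (Fin 2))⁻¹ = _
    rw [inv_one]; exact FreeGroup.one_eq_mk
  · subst h; rw [letter_yy]
    show (FreeGroup.mk [(j, true)])⁻¹ = _
    rw [FreeGroup.inv_mk]
    rfl

lemma snd_altP (x : ℕ → Gp) (N : ℕ) (Hmem : ∀ k, k < N → x k = xg ∨ ∃ j, x k = yy j) :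
    ∀ n, 2 * n ≤ N → (altP x n).2 = FreeGroup.mk (W x (2 * n)) := by
  intro n
  induction n with
  | zero =>
    intro _
    show (1 : FreeGroup (Fin 2)) = FreeGroup.mk (W x 0)
    exact FreeGroup.one_eq_mk
  | succ n ih =>
    intro h
    have p0 : (decide ((2 * n) % 2 = 1)) = false := by
      simp only [decide_eq_false_iff_not]; omega
    have p1 : (decide ((2 * n + 1) % 2 = 1)) = true := by
      simp only [decide_eq_true_eq]; omega
    show ((altP x n) * ((x (2 * n))⁻¹ * x (2 * n + 1))).2 = FreeGroup.mk (W x (2 * (n + 1)))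
    have hW : W x (2 * (n + 1)) =
        (W x (2 * n) ++ letter (x (2 * n)) false) ++ letter (x (2 * n + 1)) true := by
      show W x (2 * n + 1 + 1) = _
      rw [W, W, p0, p1]
    rw [hW, Prod.snd_mul, Prod.snd_mul, Prod.snd_inv,
      ih (by omega),
      snd_letter_false (x (2 * n)) (Hmem _ (by omega)),
      snd_letter_true (x (2 * n + 1)) (Hmem _ (by omega)),
      FreeGroup.mul_mk, FreeGroup.mul_mk, List.append_assoc]

lemma altProd_eq : ∀ (n : ℕ) (xx : Fin (2 * n) → Gp) (x : ℕ → Gp),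
    (∀ k (h : k < 2 * n), x k = xx ⟨k, h⟩) → altProd xx = altP x n := by
  intro n
  induction n with
  | zero => intro xx x _; simp [altProd, altP]
  | succ n ih =>
    intro xx x h
    have key : altProd xx =
        altProd (fun j : Fin (2 * n) => xx ⟨j.1, by omega⟩) *
          ((xx ⟨2 * n, by omega⟩)⁻¹ * xx ⟨2 * n + 1, by omega⟩) := by
      show (List.ofFn fun i : Fin (n + 1) =>
        (xx ⟨2 * i.val, by have := i.isLt; omega⟩)⁻¹ *
          xx ⟨2 * i.val + 1, by have := i.isLt; omega⟩).prod = _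
      rw [List.ofFn_succ']
      rw [List.concat_eq_append, List.prod_append, List.prod_cons, List.prod_nil, mul_one]
      rfl
    rw [key, ih _ x (fun k hk => h k (by omega))]
    show _ = altP x n * ((x (2 * n))⁻¹ * x (2 * n + 1))
    rw [h (2 * n) (by omega), h (2 * n + 1) (by omega)]

end ZF2Aux

/-- Let `G = ℤ × F_2` (with `ℤ` written multiplicatively) and
`X = {x, y_1, y_2}`, where `x = (1, e)` and `y_1, y_2` are `(0, y_1), (0, y_2)` for the
two free generators of `F_2`.  Then `X` is a Leinert set: for every `n ≥ 1` and every
valid string over `X`, the alternating product is not the identity of `G`. -/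
theorem Z_times_F2_leinert :
    let G := Multiplicative ℤ × FreeGroup (Fin 2)
    let xg : G := (Multiplicative.ofAdd 1, 1)
    let y : Fin 2 → G := fun j => (1, FreeGroup.of j)
    let X : Set G := {xg, y 0, y 1}
    ∀ (n : ℕ), 1 ≤ n → ∀ x : Fin (2 * n) → G, (∀ i, x i ∈ X) →
      (∀ (i : ℕ) (h : i + 1 < 2 * n), x ⟨i, by omega⟩ ≠ x ⟨i + 1, h⟩) →
      altProd x ≠ 1 := by
  intro G xg y X n hn x hmem hadj hcontra
  set x' : ℕ → ZF2Aux.Gp := fun k => if h : k < 2 * n then x ⟨k, h⟩ else 1 with hx'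
  have Hmem : ∀ k, k < 2 * n → x' k = ZF2Aux.xg ∨ ∃ j, x' k = ZF2Aux.yy j := by
    intro k hk
    have hm := hmem ⟨k, hk⟩
    have hxk : x' k = x ⟨k, hk⟩ := dif_pos hk
    simp only [X, Set.mem_insert_iff, Set.mem_singleton_iff] at hm
    rcases hm with h | h | h
    · left; rw [hxk, h]; rfl
    · right; exact ⟨0, by rw [hxk, h]; rfl⟩
    · right; exact ⟨1, by rw [hxk, h]; rfl⟩
  have Hadj : ∀ k, k + 1 < 2 * n → x' k ≠ x' (k + 1) := by
    intro k hk
    have h1 : x' k = x ⟨k, by omega⟩ := dif_pos (by omega)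
    have h2 : x' (k + 1) = x ⟨k + 1, hk⟩ := dif_pos hk
    rw [h1, h2]
    exact hadj k hk
  have hb : altProd x = ZF2Aux.altP x' n :=
    ZF2Aux.altProd_eq n x x' (fun k h => dif_pos h)
  have hsnd : (ZF2Aux.altP x' n).2 = 1 := by
    rw [← hb, hcontra]; rfl
  rw [ZF2Aux.snd_altP x' (2 * n) Hmem n le_rfl] at hsnd
  exact ZF2Aux.mk_ne_one
    ((ZF2Aux.invariant x' (2 * n) Hmem Hadj (2 * n) le_rfl).1)
    (ZF2Aux.W_ne x' (2 * n) Hmem Hadj (2 * n) (by omega) le_rfl)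
    hsnd
end

section
/- Let G = F_{s1} × F_{s2} be the direct product of two free groups with s1 ≥ 2 and s2 ≥ 2, and let X be the standard generating set consisting of the free generators of the two factors embedded in the product. Then the number b_8 of bad valid strings of length 8 over X satisfies b_8 ≥ 2 s1 (s1 − 1) s2 (s2 − 1); more precisely, the strings of kernel form (x_1, x_2, y_1, y_2, x_2, x_1, y_2, y_1) with x_1 ≠ x_2 generators of the first factor and y_1 ≠ y_2 generators of the second factor, together with the strings of the analogous form with the roles of the two factors interchanged, are pairwise distinct bad valid strings of length 8, and there are exactly 2 s1 (s1 − 1) s2 (s2 − 1) of them. -/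
open Function Set
open scoped commutatorElement

theorem Nat.card_fst_ne_snd (α : Type*) [Finite α] :
    Nat.card {p : α × α // p.1 ≠ p.2} = Nat.card α * (Nat.card α - 1) := by
  classical
  have := Fintype.ofFinite α
  have hoff : Finset.univ.filter (fun p : α × α => p.1 ≠ p.2) = Finset.univ.offDiag := by
    ext; simp
  rw [Nat.card_eq_fintype_card, Fintype.card_subtype, hoff, Finset.offDiag_card,
    Finset.card_univ, Nat.card_eq_fintype_card, Nat.mul_sub_one]

section KernelForm

variable {G α β : Type*}

def IsBadString [Group G] {n : ℕ} (X : Set G) (S : Fin (2 * n) → G) : Prop :=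
  (∀ i, S i ∈ X) ∧ (∀ (i : ℕ) (h : i + 1 < 2 * n), S ⟨i, by omega⟩ ≠ S ⟨i + 1, h⟩) ∧
    altProd S = 1

theorem finite_setOf_isBadString [Group G] {X : Set G} (hX : X.Finite) (n : ℕ) :
    {S : Fin (2 * n) → G | IsBadString X S}.Finite :=
  (Set.Finite.pi' fun _ => hX).subset fun _ hS => hS.1

def kernelForm (x₁ x₂ y₁ y₂ : G) : Fin (2 * 4) → G :=
  ![x₁, x₂, y₁, y₂, x₂, x₁, y₂, y₁]

theorem kernelForm_inj {x₁ x₂ y₁ y₂ x₁' x₂' y₁' y₂' : G} :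
    kernelForm x₁ x₂ y₁ y₂ = kernelForm x₁' x₂' y₁' y₂' ↔
      x₁ = x₁' ∧ x₂ = x₂' ∧ y₁ = y₁' ∧ y₂ = y₂' := by
  refine ⟨fun h => ⟨congrFun h 0, congrFun h 1, congrFun h 2, congrFun h 3⟩, ?_⟩
  rintro ⟨rfl, rfl, rfl, rfl⟩
  rfl

theorem altProd_kernelForm [Group G] (x₁ x₂ y₁ y₂ : G) :
    altProd (kernelForm x₁ x₂ y₁ y₂) = ⁅x₁⁻¹ * x₂, y₁⁻¹ * y₂⁆ := by
  simp [altProd, kernelForm, List.ofFn_succ, commutatorElement_def, mul_assoc]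

def kernelStringsOf (x : α → G) (y : β → G) : Set (Fin (2 * 4) → G) :=
  {S | ∃ a₁ a₂ b₁ b₂, a₁ ≠ a₂ ∧ b₁ ≠ b₂ ∧ S = kernelForm (x a₁) (x a₂) (y b₁) (y b₂)}

def kernelStrings (x : α → G) (y : β → G) : Set (Fin (2 * 4) → G) :=
  kernelStringsOf x y ∪ kernelStringsOf y x

def kernelFormOfPairs (x : α → G) (y : β → G)
    (p : {p : α × α // p.1 ≠ p.2} × {q : β × β // q.1 ≠ q.2}) : Fin (2 * 4) → G :=
  kernelForm (x p.1.1.1) (x p.1.1.2) (y p.2.1.1) (y p.2.1.2)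

variable {x : α → G} {y : β → G}

theorem isBadString_of_mem_kernelStringsOf [Group G] (hx : Injective x) (hy : Injective y)
    (hxy : ∀ a b, x a ≠ y b) (hc : ∀ a b, Commute (x a) (y b)) {S : Fin (2 * 4) → G}
    (hS : S ∈ kernelStringsOf x y) : IsBadString (range x ∪ range y) S := by
  obtain ⟨a₁, a₂, b₁, b₂, ha, hb, rfl⟩ := hS
  refine ⟨fun i => ?_, fun i h => ?_, ?_⟩
  · fin_cases i <;> simp [kernelForm]
  · have hi : i ≤ 6 := by omega
    interval_cases i <;>
      simp [kernelForm, hx.ne ha, hy.ne hb, hx.ne ha.symm, hy.ne hb.symm, hxy, (hxy _ _).symm]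
  · have hcx : ∀ b, Commute ((x a₁)⁻¹ * x a₂) (y b) := fun b =>
      (hc a₁ b).inv_left.mul_left (hc a₂ b)
    rw [altProd_kernelForm, commutatorElement_eq_one_iff_commute]
    exact (hcx b₁).inv_right.mul_right (hcx b₂)

theorem isBadString_of_mem_kernelStrings [Group G] (hx : Injective x) (hy : Injective y)
    (hxy : ∀ a b, x a ≠ y b) (hc : ∀ a b, Commute (x a) (y b)) {S : Fin (2 * 4) → G}
    (hS : S ∈ kernelStrings x y) : IsBadString (range x ∪ range y) S := by
  rcases hS with hS | hS
  · exact isBadString_of_mem_kernelStringsOf hx hy hxy hc hS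
  · rw [Set.union_comm]
    exact isBadString_of_mem_kernelStringsOf hy hx (fun b a => (hxy a b).symm)
      (fun b a => (hc a b).symm) hS

theorem range_kernelFormOfPairs : range (kernelFormOfPairs x y) = kernelStringsOf x y := by
  ext S
  constructor
  · rintro ⟨⟨⟨⟨a₁, a₂⟩, ha⟩, ⟨⟨b₁, b₂⟩, hb⟩⟩, rfl⟩
    exact ⟨a₁, a₂, b₁, b₂, ha, hb, rfl⟩
  · rintro ⟨a₁, a₂, b₁, b₂, ha, hb, rfl⟩
    exact ⟨(⟨(a₁, a₂), ha⟩, ⟨(b₁, b₂), hb⟩), rfl⟩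

theorem kernelFormOfPairs_injective (hx : Injective x) (hy : Injective y) :
    Injective (kernelFormOfPairs x y) := by
  rintro ⟨⟨⟨a₁, a₂⟩, _⟩, ⟨⟨b₁, b₂⟩, _⟩⟩ ⟨⟨⟨a₁', a₂'⟩, _⟩, ⟨⟨b₁', b₂'⟩, _⟩⟩ h
  obtain ⟨h₁, h₂, h₃, h₄⟩ := kernelForm_inj.1 h
  cases hx h₁; cases hx h₂; cases hy h₃; cases hy h₄
  rfl

theorem finite_kernelStringsOf [Finite α] [Finite β] : (kernelStringsOf x y).Finite :=
  range_kernelFormOfPairs ▸ Set.finite_range _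

theorem natCard_kernelStringsOf [Finite α] [Finite β] (hx : Injective x) (hy : Injective y) :
    Nat.card (kernelStringsOf x y) =
      Nat.card α * (Nat.card α - 1) * (Nat.card β * (Nat.card β - 1)) := by
  rw [← range_kernelFormOfPairs, Nat.card_range_of_injective (kernelFormOfPairs_injective hx hy),
    Nat.card_prod, Nat.card_fst_ne_snd, Nat.card_fst_ne_snd]

theorem disjoint_kernelStringsOf (hxy : ∀ a b, x a ≠ y b) :
    Disjoint (kernelStringsOf x y) (kernelStringsOf y x) := by
  rw [Set.disjoint_left]
  rintro S ⟨a₁, a₂, b₁, b₂, -, -, rfl⟩ ⟨b₁', b₂', a₁', a₂', -, -, h⟩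
  exact hxy a₁ b₁' (congrFun h 0)

theorem natCard_kernelStrings [Finite α] [Finite β] (hx : Injective x) (hy : Injective y)
    (hxy : ∀ a b, x a ≠ y b) :
    Nat.card (kernelStrings x y) =
      2 * (Nat.card α * (Nat.card α - 1) * (Nat.card β * (Nat.card β - 1))) := by
  rw [kernelStrings, Nat.card_coe_set_eq, Set.ncard_union_eq (disjoint_kernelStringsOf hxy)
      finite_kernelStringsOf finite_kernelStringsOf, ← Nat.card_coe_set_eq,
    ← Nat.card_coe_set_eq, natCard_kernelStringsOf hx hy, natCard_kernelStringsOf hy hx]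
  ring

end KernelForm

/-- Let `G = F_{s1} × F_{s2}` with `s1, s2 ≥ 2` and `X` the standard
generating set.  The strings of kernel form `(a1, a2, b1, b2, a2, a1, b2, b1)` with
`a1 ≠ a2` generators of the first factor and `b1 ≠ b2` generators of the second, and
the analogous strings with the roles of the two factors interchanged, are pairwise
distinct bad valid strings of length 8; there are exactly `2 s1 (s1-1) s2 (s2-1)` of
them, and consequently `b_8 ≥ 2 s1 (s1-1) s2 (s2-1)`. -/
theorem product_bad_strings_length_eight (s1 s2 : ℕ) :
    let G := FreeGroup (Fin s1) × FreeGroup (Fin s2)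
    let ea : Fin s1 → G := fun a => (FreeGroup.of a, 1)
    let eb : Fin s2 → G := fun b => (1, FreeGroup.of b)
    let X : Set G := Set.range ea ∪ Set.range eb
    let T : Set (Fin (2 * 4) → G) :=
      {S | (∃ a1 a2 b1 b2, a1 ≠ a2 ∧ b1 ≠ b2 ∧
              S = ![ea a1, ea a2, eb b1, eb b2, ea a2, ea a1, eb b2, eb b1]) ∨
           (∃ b1 b2 a1 a2, b1 ≠ b2 ∧ a1 ≠ a2 ∧
              S = ![eb b1, eb b2, ea a1, ea a2, eb b2, eb b1, ea a2, ea a1])}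
    (∀ S ∈ T, (∀ i, S i ∈ X) ∧
      (∀ (i : ℕ) (h : i + 1 < 2 * 4), S ⟨i, by omega⟩ ≠ S ⟨i + 1, h⟩) ∧
      altProd S = 1) ∧
    Nat.card T = 2 * s1 * (s1 - 1) * s2 * (s2 - 1) ∧
    2 * s1 * (s1 - 1) * s2 * (s2 - 1) ≤
      Nat.card {S : Fin (2 * 4) → G // (∀ i, S i ∈ X) ∧
        (∀ (i : ℕ) (h : i + 1 < 2 * 4), S ⟨i, by omega⟩ ≠ S ⟨i + 1, h⟩) ∧
        altProd S = 1} := by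
  intro G ea eb X T
  have hea : Injective ea := (Prod.mk_left_injective 1).comp FreeGroup.of_injective
  have heb : Injective eb := (Prod.mk_right_injective 1).comp FreeGroup.of_injective
  have hne : ∀ a b, ea a ≠ eb b := fun a _ h => FreeGroup.of_ne_one a (congrArg Prod.fst h)
  have hc : ∀ a b, Commute (ea a) (eb b) := fun a b =>
    MonoidHom.commute_inl_inr (FreeGroup.of a) (FreeGroup.of b)
  have hbad : ∀ S ∈ T, IsBadString X S := fun _ =>
    isBadString_of_mem_kernelStrings hea heb hne hc
  have hcard : Nat.card T = 2 * s1 * (s1 - 1) * s2 * (s2 - 1) := by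
    rw [show T = kernelStrings ea eb from rfl, natCard_kernelStrings hea heb hne,
      Nat.card_fin, Nat.card_fin]
    ring
  exact ⟨hbad, hcard, hcard ▸ Nat.card_mono (finite_setOf_isBadString X.toFinite 4) hbad⟩
end
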